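/- arXiv:0909.4937 — 2 statements merged into one kernel-verified Lean document; each statement's English description precedes it below -/
import Mathlib

section
/- (Walnut's estimate.) Let g : ℝ → ℂ be a measurable function with finite Wiener amalgam norm ‖g‖_W, and let a > 0. Then for every finitely supported family of coefficients c : ℤ² → ℂ, the function Σ_{(k,l)∈ℤ²} c_{k,l} π_{(ak,al)} g belongs to L²(ℝ) and ‖Σ_{(k,l)∈ℤ²} c_{k,l} π_{(ak,al)} g‖_{L²(ℝ)} ≤ (1 + a^{−1}) ‖g‖_W (Σ_{(k,l)∈ℤ²} |c_{k,l}|²)^{1/2}. -/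
/-!
Group the terms by translation index: `Σ c_{k,l} π_{(ak,al)} g (t) = Σ_k m_k(t) g(t - ak)`, where
`m_k(t) = Σ_l c_{k,l} e^{2πialt}` is a trigonometric polynomial of period `1/a`. With
`s_n = sup_{[n,n+1]} |g|`, bounding `|g(t - ak)|` by `s_{⌊t-ak⌋}` gives `|F| ≤ Σ_n s_n H_n` with
`H_n(t) = Σ_{⌊t-ak⌋=n} |m_k(t)|`, so by Minkowski `‖F‖₂ ≤ Σ_n s_n ‖H_n‖₂`. For fixed `n` and `t`
the indices `k` occurring in `H_n(t)` lie in an interval of length `1/a`, so there are at most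
`1 + 1/a` of them, and Cauchy–Schwarz gives `‖H_n‖₂² ≤ (1 + 1/a) Σ_k ∫_{n+ak}^{n+ak+1} |m_k|²`.
An interval of length one is covered by `⌈a⌉` periods of `m_k`, and over one period orthogonality
of the exponentials gives `∫ |m_k|² = a⁻¹ Σ_l |c_{k,l}|²`; as `⌈a⌉ a⁻¹ ≤ 1 + a⁻¹`, every `H_n`
has `L²` norm at most `(1 + a⁻¹) ‖c‖₂`.
-/

open MeasureTheory Complex
open scoped ENNReal NNReal

/-- Time-frequency shift: `(π_(x,ξ) f)(t) = e^{2πiξt} f(t-x)`. -/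
noncomputable def tfShift (x ξ : ℝ) (f : ℝ → ℂ) : ℝ → ℂ :=
  fun t => Complex.exp (2 * Real.pi * Complex.I * ξ * t) * f (t - x)

/-- The Wiener amalgam norm `‖g‖_W = Σ_{k∈ℤ} sup_{t∈[0,1]} |g(t+k)|` (valued in `ℝ≥0∞`). -/
noncomputable def wienerNorm (g : ℝ → ℂ) : ℝ≥0∞ :=
  ∑' k : ℤ, ⨆ t : Set.Icc (0 : ℝ) 1, (‖g ((t : ℝ) + (k : ℝ))‖₊ : ℝ≥0∞)

open scoped Real ComplexConjugate

theorem Finsupp.sum_support_eq_sum_image_product {α β M N : Type*} [DecidableEq α] [DecidableEq β]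
    [Zero M] [AddCommMonoid N] (c : α × β →₀ M) (f : α × β → N) (hf : ∀ p, c p = 0 → f p = 0) :
    ∑ p ∈ c.support, f p
      = ∑ x ∈ c.support.image Prod.fst, ∑ y ∈ c.support.image Prod.snd, f (x, y) := by
  rw [← Finset.sum_product]
  refine Finset.sum_subset (fun p hp => Finset.mem_product.2
    ⟨Finset.mem_image_of_mem _ hp, Finset.mem_image_of_mem _ hp⟩) fun p _ hp => hf p ?_
  simpa using hp

theorem Finset.sum_mul_comp_eq_tsum_fiberwise {ι : Type*} (K : Finset ι) (φ : ι → ℤ) (s : ℤ → ℝ≥0∞)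
    (x : ι → ℝ≥0∞) : ∑ k ∈ K, x k * s (φ k) = ∑' n, s n * ∑ k ∈ K with φ k = n, x k := by
  simp_rw [Finset.mul_sum, Finset.sum_filter]
  rw [Summable.tsum_finsetSum fun _ _ => ENNReal.summable]
  refine Finset.sum_congr rfl fun k _ => ?_
  simp_rw [eq_comm (a := φ k)]
  rw [tsum_ite_eq (φ k) (fun n => s n * x k), mul_comm]

theorem enorm_sum_sq_le_card_mul {ι E : Type*} [SeminormedAddCommGroup E] (s : Finset ι)
    (f : ι → E) : (∑ i ∈ s, ‖f i‖ₑ) ^ 2 ≤ s.card * ∑ i ∈ s, ‖f i‖ₑ ^ 2 := by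
  simp only [enorm_eq_nnnorm]
  exact_mod_cast (sq_sum_le_card_mul_sum_sq : (∑ i ∈ s, ‖f i‖₊) ^ 2 ≤ _)

theorem card_int_le_of_forall_mem_Ioc {S : Finset ℤ} {x ℓ : ℝ} (hℓ : 0 ≤ ℓ)
    (hS : ∀ k ∈ S, x < k ∧ (k : ℝ) ≤ x + ℓ) : (S.card : ℝ) ≤ ℓ + 1 := by
  have hsub : S ⊆ Finset.Ioc ⌊x⌋ ⌊x + ℓ⌋ := fun k hk => by
    obtain ⟨h₁, h₂⟩ := hS k hk
    exact Finset.mem_Ioc.2 ⟨Int.floor_lt.2 h₁, Int.le_floor.2 h₂⟩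
  have hcard := Finset.card_le_card hsub
  rw [Int.card_Ioc] at hcard
  have hfloor : ((⌊x + ℓ⌋ - ⌊x⌋ : ℤ) : ℝ) < ℓ + 1 := by
    push_cast
    linarith [Int.floor_le (x + ℓ), Int.lt_floor_add_one x]
  calc (S.card : ℝ) ≤ ((⌊x + ℓ⌋ - ⌊x⌋).toNat : ℝ) := by exact_mod_cast hcard
    _ ≤ ℓ + 1 := by
      rcases le_or_gt (⌊x + ℓ⌋ - ⌊x⌋) 0 with h | h
      · rw [Int.toNat_of_nonpos h]; simp; linarith
      · rw [← Int.cast_natCast, Int.toNat_of_nonneg h.le]; exact hfloor.le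

theorem card_filter_floor_sub_mul_eq_le {a : ℝ} (ha : 0 < a) (K : Finset ℤ) (t : ℝ) (n : ℤ) :
    ((K.filter fun k : ℤ => ⌊t - a * k⌋ = n).card : ℝ) ≤ 1 + a⁻¹ := by
  rw [add_comm]
  refine card_int_le_of_forall_mem_Ioc (x := (t - n - 1) / a) (inv_nonneg.2 ha.le) fun k hk => ?_
  have hk := Int.floor_eq_iff.1 (Finset.mem_filter.1 hk).2
  constructor
  · rw [div_lt_iff₀ ha]; linarith
  · rw [show (t - n - 1) / a + a⁻¹ = (t - n) / a by field_simp; ring, le_div_iff₀ ha]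
    linarith

theorem setOf_floor_sub_eq (x : ℝ) (n : ℤ) :
    {t : ℝ | ⌊t - x⌋ = n} = Set.Ico (n + x) (n + x + 1) := by
  ext t
  simp only [Set.mem_ofPred_eq, Set.mem_Ico, Int.floor_eq_iff]
  constructor <;> rintro ⟨h₁, h₂⟩ <;> constructor <;> linarith

theorem measurableSet_floor_sub_eq (x : ℝ) (n : ℤ) : MeasurableSet {t : ℝ | ⌊t - x⌋ = n} := by
  rw [setOf_floor_sub_eq]; exact measurableSet_Ico

theorem Function.Periodic.intervalIntegral_le_natCeil_mul {f : ℝ → ℝ} {T : ℝ}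
    (hf : Function.Periodic f T) (hT : 0 < T) (hf₀ : 0 ≤ f)
    (hfi : ∀ t₁ t₂, IntervalIntegrable f volume t₁ t₂) (x : ℝ) {ℓ : ℝ} (hℓ : 0 ≤ ℓ) :
    ∫ t in x..x + ℓ, f t ≤ ⌈ℓ / T⌉₊ * ∫ t in (0 : ℝ)..T, f t := by
  have hℓT : ℓ ≤ (⌈ℓ / T⌉₊ : ℤ) • T := by
    rw [zsmul_eq_mul, Int.cast_natCast, ← div_le_iff₀ hT]
    exact Nat.le_ceil _
  calc ∫ t in x..x + ℓ, f t
      ≤ ∫ t in x..x + (⌈ℓ / T⌉₊ : ℤ) • T, f t :=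
        intervalIntegral.integral_mono_interval le_rfl (by linarith) (by linarith)
          (Filter.Eventually.of_forall hf₀) (hfi _ _)
    _ = ⌈ℓ / T⌉₊ * ∫ t in (0 : ℝ)..T, f t := by
        rw [hf.intervalIntegral_add_zsmul_eq _ _ hfi, hf.intervalIntegral_add_eq x 0, zero_add,
          zsmul_eq_mul, Int.cast_natCast]

theorem Continuous.setLIntegral_Ico_enorm_sq {E : Type*} [NormedAddCommGroup E] {f : ℝ → E}
    (hf : Continuous f) {x y : ℝ} (hxy : x ≤ y) :
    ∫⁻ t in Set.Ico x y, ‖f t‖ₑ ^ 2 = ENNReal.ofReal (∫ t in x..y, ‖f t‖ ^ 2) := by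
  rw [Measure.restrict_congr_set Ico_ae_eq_Ioc, intervalIntegral.integral_of_le hxy,
    ofReal_integral_eq_lintegral_ofReal]
  · refine lintegral_congr fun t => ?_
    rw [ENNReal.ofReal_pow (norm_nonneg _), ofReal_norm]
  · exact ((hf.norm.pow 2).integrableOn_Icc).mono_set Set.Ioc_subset_Icc_self
  · exact Filter.Eventually.of_forall fun t => sq_nonneg _

section LpBounds

variable {α : Type*} [MeasurableSpace α] {μ : Measure α}

theorem eLpNorm'_const_mul_ennreal {f : α → ℝ≥0∞} (hf : AEMeasurable f μ) (c : ℝ≥0∞) {q : ℝ}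
    (hq : 0 < q) : eLpNorm' (fun x => c * f x) q μ = c * eLpNorm' f q μ := by
  simp only [eLpNorm'_eq_lintegral_enorm, enorm_eq_self]
  simp_rw [ENNReal.mul_rpow_of_nonneg _ _ hq.le]
  rw [lintegral_const_mul'' _ (hf.pow_const q), ENNReal.mul_rpow_of_nonneg _ _ (by positivity),
    ← ENNReal.rpow_mul, mul_one_div_cancel hq.ne', ENNReal.rpow_one]

theorem eLpNorm'_tsum_le {ι : Type*} [Countable ι] {f : ι → α → ℝ≥0∞}
    (hf : ∀ i, AEMeasurable (f i) μ) {q : ℝ} (hq : 1 ≤ q) :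
    eLpNorm' (fun x => ∑' i, f i x) q μ ≤ ∑' i, eLpNorm' (f i) q μ := by
  have hq₀ : 0 < q := by linarith
  have hsup : ∀ x, (∑' i, f i x) ^ q = ⨆ s : Finset ι, (∑ i ∈ s, f i x) ^ q := fun x => by
    rw [ENNReal.tsum_eq_iSup_sum]
    exact (ENNReal.orderIsoRpow q hq₀).map_iSup _
  have hmono : Monotone fun s : Finset ι => fun x => (∑ i ∈ s, f i x) ^ q := fun s s' hss' x =>
    ENNReal.rpow_le_rpow (Finset.sum_le_sum_of_subset hss') hq₀.le
  rw [eLpNorm'_eq_lintegral_enorm, one_div, ENNReal.rpow_inv_le_iff hq₀]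
  simp only [enorm_eq_self, hsup]
  rw [lintegral_iSup_directed
    (fun s => (Finset.aemeasurable_fun_sum s fun i _ => hf i).pow_const q) hmono.directed_le]
  refine iSup_le fun s => ?_
  rw [← ENNReal.rpow_inv_le_iff hq₀, ← one_div]
  calc (∫⁻ x, (∑ i ∈ s, f i x) ^ q ∂μ) ^ (1 / q)
      = eLpNorm' (∑ i ∈ s, f i) q μ := by
        simp only [eLpNorm'_eq_lintegral_enorm, enorm_eq_self, Finset.sum_apply]
    _ ≤ ∑ i ∈ s, eLpNorm' (f i) q μ :=
        eLpNorm'_sum_le (fun i _ => (hf i).aestronglyMeasurable) hq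
    _ ≤ ∑' i, eLpNorm' (f i) q μ := ENNReal.sum_le_tsum s

theorem eLpNorm'_two_le_ofReal_sqrt {f : α → ℝ≥0∞} {X : ℝ} (hX : 0 ≤ X)
    (h : ∫⁻ x, f x ^ 2 ∂μ ≤ ENNReal.ofReal X) : eLpNorm' f 2 μ ≤ ENNReal.ofReal √X := by
  rw [eLpNorm'_eq_lintegral_enorm, Real.sqrt_eq_rpow, ← ENNReal.ofReal_rpow_of_nonneg hX
    (by norm_num)]
  simp only [enorm_eq_self, ENNReal.rpow_two]
  exact ENNReal.rpow_le_rpow h (by norm_num)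

theorem memLp_two_and_sqrt_integral_le {E : Type*} [NormedAddCommGroup E] {f : α → E}
    (hf : AEStronglyMeasurable f μ) {C : ℝ≥0∞} (hC : C ≠ ⊤) (h : eLpNorm f 2 μ ≤ C) :
    MemLp f 2 μ ∧ √(∫ x, ‖f x‖ ^ 2 ∂μ) ≤ C.toReal := by
  have hf₂ : MemLp f 2 μ := ⟨hf, h.trans_lt hC.lt_top⟩
  refine ⟨hf₂, ?_⟩
  rw [hf₂.eLpNorm_eq_integral_rpow_norm two_ne_zero ENNReal.ofNat_ne_top,
    ENNReal.ofReal_le_iff_le_toReal hC] at h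
  simpa [Real.sqrt_eq_rpow] using h

end LpBounds

noncomputable def trigPoly (a : ℝ) (L : Finset ℤ) (d : ℤ → ℂ) (t : ℝ) : ℂ :=
  ∑ l ∈ L, d l * Complex.exp (2 * π * I * ((a * l : ℝ) : ℂ) * t)

section TrigPoly

variable {a : ℝ} (L : Finset ℤ) (d : ℤ → ℂ)

theorem continuous_trigPoly : Continuous (trigPoly a L d) := by
  unfold trigPoly; fun_prop

theorem periodic_trigPoly (ha : a ≠ 0) : Function.Periodic (trigPoly a L d) a⁻¹ := by
  have ha' : (a : ℂ) ≠ 0 := by exact_mod_cast ha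
  intro t
  refine Finset.sum_congr rfl fun l _ => ?_
  have : 2 * π * I * ((a * l : ℝ) : ℂ) * ((t + a⁻¹ : ℝ) : ℂ)
      = 2 * π * I * ((a * l : ℝ) : ℂ) * t + l * (2 * π * I) := by
    push_cast; field_simp
  rw [this, Complex.exp_add, Complex.exp_int_mul_two_pi_mul_I, mul_one]

theorem integral_exp_two_pi_I_mul_int (ha : a ≠ 0) (m : ℤ) :
    ∫ t in (0 : ℝ)..a⁻¹, Complex.exp (2 * π * I * ((a * m : ℝ) : ℂ) * t)
      = if m = 0 then ((a⁻¹ : ℝ) : ℂ) else 0 := by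
  split_ifs with hm
  · simp [hm]
  · have ha' : (a : ℂ) ≠ 0 := by exact_mod_cast ha
    have hc : 2 * π * I * ((a * m : ℝ) : ℂ) ≠ 0 := by simp [Real.pi_ne_zero, ha, hm]
    rw [integral_exp_mul_complex hc,
      show 2 * π * I * ((a * m : ℝ) : ℂ) * ((a⁻¹ : ℝ) : ℂ) = m * (2 * π * I) by
        push_cast; field_simp,
      Complex.exp_int_mul_two_pi_mul_I]
    simp

theorem norm_sq_trigPoly (t : ℝ) :
    ((‖trigPoly a L d t‖ ^ 2 : ℝ) : ℂ) = ∑ l ∈ L, ∑ l' ∈ L,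
      d l * conj (d l') * Complex.exp (2 * π * I * ((a * (l - l' : ℤ) : ℝ) : ℂ) * t) := by
  rw [Complex.ofReal_pow, ← Complex.mul_conj', trigPoly, map_sum, Finset.sum_mul_sum]
  refine Finset.sum_congr rfl fun l _ => Finset.sum_congr rfl fun l' _ => ?_
  rw [map_mul, ← Complex.exp_conj, mul_mul_mul_comm, ← Complex.exp_add]
  congr 2
  simp only [map_mul, Complex.conj_I, Complex.conj_ofReal, map_ofNat]
  push_cast
  ring

theorem integral_norm_sq_trigPoly (ha : a ≠ 0) :
    ∫ t in (0 : ℝ)..a⁻¹, ‖trigPoly a L d t‖ ^ 2 = a⁻¹ * ∑ l ∈ L, ‖d l‖ ^ 2 := by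
  apply Complex.ofReal_injective
  rw [← intervalIntegral.integral_ofReal]
  simp_rw [norm_sq_trigPoly]
  rw [intervalIntegral.integral_finsetSum fun l _ => by
    apply Continuous.intervalIntegrable; fun_prop]
  have hdiag : ∀ l ∈ L, ∫ t in (0 : ℝ)..a⁻¹, ∑ l' ∈ L,
      d l * conj (d l') * Complex.exp (2 * π * I * ((a * (l - l' : ℤ) : ℝ) : ℂ) * t)
        = ((a⁻¹ * ‖d l‖ ^ 2 : ℝ) : ℂ) := by
    intro l hl
    rw [intervalIntegral.integral_finsetSum fun l' _ => by
      apply Continuous.intervalIntegrable; fun_prop]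
    simp_rw [intervalIntegral.integral_const_mul, integral_exp_two_pi_I_mul_int ha, sub_eq_zero,
      mul_ite, mul_zero, Finset.sum_ite_eq L l, if_pos hl, Complex.mul_conj']
    push_cast; ring
  rw [Finset.sum_congr rfl hdiag]
  push_cast
  rw [Finset.mul_sum]

theorem lintegral_Ico_enorm_sq_trigPoly_le (ha : 0 < a) (x : ℝ) :
    ∫⁻ t in Set.Ico x (x + 1), ‖trigPoly a L d t‖ₑ ^ 2
      ≤ ENNReal.ofReal ((1 + a⁻¹) * ∑ l ∈ L, ‖d l‖ ^ 2) := by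
  have hcont := continuous_trigPoly (a := a) L d
  rw [hcont.setLIntegral_Ico_enorm_sq (by linarith)]
  refine ENNReal.ofReal_le_ofReal ?_
  have hceil : (⌈a⌉₊ : ℝ) * a⁻¹ ≤ 1 + a⁻¹ := by
    have := mul_le_mul_of_nonneg_right (Nat.ceil_lt_add_one ha.le).le (inv_nonneg.2 ha.le)
    rwa [add_mul, mul_inv_cancel₀ ha.ne', one_mul] at this
  calc ∫ t in x..x + 1, ‖trigPoly a L d t‖ ^ 2
      ≤ ⌈1 / a⁻¹⌉₊ * ∫ t in (0 : ℝ)..a⁻¹, ‖trigPoly a L d t‖ ^ 2 :=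
        ((periodic_trigPoly L d ha.ne').comp fun z => ‖z‖ ^ 2).intervalIntegral_le_natCeil_mul
          (inv_pos.2 ha) (fun t => sq_nonneg _)
          (fun _ _ => (hcont.norm.pow 2).intervalIntegrable _ _) x zero_le_one
    _ = ⌈a⌉₊ * a⁻¹ * ∑ l ∈ L, ‖d l‖ ^ 2 := by
        rw [one_div, inv_inv, integral_norm_sq_trigPoly L d ha.ne', mul_assoc]
    _ ≤ (1 + a⁻¹) * ∑ l ∈ L, ‖d l‖ ^ 2 :=
        mul_le_mul_of_nonneg_right hceil (Finset.sum_nonneg fun l _ => sq_nonneg _)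

end TrigPoly

theorem sum_tfShift_eq_sum_trigPoly_mul (a : ℝ) (g : ℝ → ℂ) (c : (ℤ × ℤ) →₀ ℂ) (t : ℝ) :
    ∑ kl ∈ c.support, c kl * tfShift (a * kl.1) (a * kl.2) g t
      = ∑ k ∈ c.support.image Prod.fst,
          trigPoly a (c.support.image Prod.snd) (fun l => c (k, l)) t * g (t - a * k) := by
  rw [c.sum_support_eq_sum_image_product _ fun p hp => by simp [hp]]
  simp only [trigPoly, tfShift, Finset.sum_mul]
  exact Finset.sum_congr rfl fun k _ => Finset.sum_congr rfl fun l _ => by ring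

noncomputable def wienerLocalSup (g : ℝ → ℂ) (n : ℤ) : ℝ≥0∞ :=
  ⨆ t : Set.Icc (0 : ℝ) 1, (‖g ((t : ℝ) + (n : ℝ))‖₊ : ℝ≥0∞)

theorem tsum_wienerLocalSup (g : ℝ → ℂ) : ∑' n, wienerLocalSup g n = wienerNorm g := rfl

theorem enorm_le_wienerLocalSup (g : ℝ → ℂ) (u : ℝ) : ‖g u‖ₑ ≤ wienerLocalSup g ⌊u⌋ := by
  have hu : u - ⌊u⌋ ∈ Set.Icc (0 : ℝ) 1 :=
    ⟨by linarith [Int.floor_le u], by linarith [Int.lt_floor_add_one u]⟩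
  calc ‖g u‖ₑ = ‖g (((⟨_, hu⟩ : Set.Icc (0 : ℝ) 1) : ℝ) + ⌊u⌋)‖₊ := by simp [enorm_eq_nnnorm]
    _ ≤ wienerLocalSup g ⌊u⌋ :=
      le_iSup (fun t : Set.Icc (0 : ℝ) 1 => (‖g ((t : ℝ) + ⌊u⌋)‖₊ : ℝ≥0∞)) ⟨_, hu⟩

section ModulatedTranslates

variable {a : ℝ} (K : Finset ℤ) {m : ℤ → ℝ → ℂ}

theorem enorm_sum_mul_translate_le (g : ℝ → ℂ) (t : ℝ) :
    ‖∑ k ∈ K, m k t * g (t - a * k)‖ₑ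
      ≤ ∑' n, wienerLocalSup g n * ∑ k ∈ K with ⌊t - a * (k : ℤ)⌋ = n, ‖m k t‖ₑ :=
  calc ‖∑ k ∈ K, m k t * g (t - a * k)‖ₑ
      ≤ ∑ k ∈ K, ‖m k t‖ₑ * ‖g (t - a * k)‖ₑ := by
        simpa only [enorm_mul] using enorm_sum_le K fun k => m k t * g (t - a * k)
    _ ≤ ∑ k ∈ K, ‖m k t‖ₑ * wienerLocalSup g ⌊t - a * k⌋ := by
        gcongr with k; exact enorm_le_wienerLocalSup g _
    _ = _ := K.sum_mul_comp_eq_tsum_fiberwise _ _ _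

theorem measurable_sum_filter_floor_eq (hm : ∀ k, Measurable (m k)) (n : ℤ) :
    Measurable fun t => ∑ k ∈ K with ⌊t - a * (k : ℤ)⌋ = n, ‖m k t‖ₑ := by
  simp_rw [Finset.sum_filter]
  exact Finset.measurable_fun_sum _ fun k _ =>
    Measurable.ite (measurableSet_floor_sub_eq _ n) (hm k).enorm measurable_const

theorem sq_sum_filter_floor_le (ha : 0 < a) (t : ℝ) (n : ℤ) :
    (∑ k ∈ K with ⌊t - a * (k : ℤ)⌋ = n, ‖m k t‖ₑ) ^ 2
      ≤ ENNReal.ofReal (1 + a⁻¹)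
        * ∑ k ∈ K, {t : ℝ | ⌊t - a * k⌋ = n}.indicator (fun t => ‖m k t‖ₑ ^ 2) t := by
  have hcard : ((K.filter fun k : ℤ => ⌊t - a * k⌋ = n).card : ℝ≥0∞)
      ≤ ENNReal.ofReal (1 + a⁻¹) := by
    rw [← ENNReal.ofReal_natCast]
    exact ENNReal.ofReal_le_ofReal (card_filter_floor_sub_mul_eq_le ha K t n)
  calc (∑ k ∈ K with ⌊t - a * (k : ℤ)⌋ = n, ‖m k t‖ₑ) ^ 2
      ≤ (K.filter fun k : ℤ => ⌊t - a * k⌋ = n).card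
          * ∑ k ∈ K with ⌊t - a * (k : ℤ)⌋ = n, ‖m k t‖ₑ ^ 2 :=
        enorm_sum_sq_le_card_mul _ _
    _ ≤ _ := by
        rw [Finset.sum_filter]
        gcongr with k
        simp [Set.indicator_apply]

theorem lintegral_sq_sum_filter_floor_le (ha : 0 < a) (hm : ∀ k, Measurable (m k))
    {B : ℤ → ℝ≥0∞} (hB : ∀ k ∈ K, ∀ x, ∫⁻ t in Set.Ico x (x + 1), ‖m k t‖ₑ ^ 2 ≤ B k) (n : ℤ) :
    ∫⁻ t, (∑ k ∈ K with ⌊t - a * (k : ℤ)⌋ = n, ‖m k t‖ₑ) ^ 2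
      ≤ ENNReal.ofReal (1 + a⁻¹) * ∑ k ∈ K, B k := by
  have hmeas : ∀ k : ℤ, Measurable ({t : ℝ | ⌊t - a * k⌋ = n}.indicator fun t => ‖m k t‖ₑ ^ 2) :=
    fun k => ((hm k).enorm.pow_const 2).indicator (measurableSet_floor_sub_eq _ n)
  calc ∫⁻ t, (∑ k ∈ K with ⌊t - a * (k : ℤ)⌋ = n, ‖m k t‖ₑ) ^ 2
      ≤ ∫⁻ t, ENNReal.ofReal (1 + a⁻¹)
          * ∑ k ∈ K, {t : ℝ | ⌊t - a * k⌋ = n}.indicator (fun t => ‖m k t‖ₑ ^ 2) t :=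
        lintegral_mono fun t => sq_sum_filter_floor_le K ha t n
    _ = ENNReal.ofReal (1 + a⁻¹) * ∑ k ∈ K, ∫⁻ t in {t : ℝ | ⌊t - a * k⌋ = n}, ‖m k t‖ₑ ^ 2 := by
        rw [lintegral_const_mul _ (Finset.measurable_fun_sum _ fun k _ => hmeas k),
          lintegral_finsetSum _ fun k _ => hmeas k]
        simp_rw [lintegral_indicator (measurableSet_floor_sub_eq _ n)]
    _ ≤ ENNReal.ofReal (1 + a⁻¹) * ∑ k ∈ K, B k := by
        gcongr with k hk
        simpa only [setOf_floor_sub_eq] using hB k hk _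

theorem eLpNorm_sum_mul_translate_le (ha : 0 < a) (g : ℝ → ℂ) (hm : ∀ k, Measurable (m k))
    {B : ℤ → ℝ} (hB₀ : ∀ k, 0 ≤ B k)
    (hB : ∀ k ∈ K, ∀ x, ∫⁻ t in Set.Ico x (x + 1), ‖m k t‖ₑ ^ 2 ≤ ENNReal.ofReal (B k)) :
    eLpNorm (fun t => ∑ k ∈ K, m k t * g (t - a * k)) 2 volume
      ≤ wienerNorm g * ENNReal.ofReal √((1 + a⁻¹) * ∑ k ∈ K, B k) := by
  set H : ℤ → ℝ → ℝ≥0∞ := fun n t => ∑ k ∈ K with ⌊t - a * (k : ℤ)⌋ = n, ‖m k t‖ₑ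
  have hH : ∀ n, eLpNorm' (H n) 2 volume ≤ ENNReal.ofReal √((1 + a⁻¹) * ∑ k ∈ K, B k) := by
    intro n
    refine eLpNorm'_two_le_ofReal_sqrt
      (mul_nonneg (by positivity) (Finset.sum_nonneg fun k _ => hB₀ k)) ?_
    rw [ENNReal.ofReal_mul (by positivity), ENNReal.ofReal_sum_of_nonneg fun k _ => hB₀ k]
    exact lintegral_sq_sum_filter_floor_le K ha hm hB n
  have hHmeas : ∀ n, AEMeasurable (H n) volume := fun n =>
    (measurable_sum_filter_floor_eq K hm n).aemeasurable
  calc eLpNorm (fun t => ∑ k ∈ K, m k t * g (t - a * k)) 2 volume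
      ≤ eLpNorm (fun t => ∑' n, wienerLocalSup g n * H n t) 2 volume :=
        eLpNorm_mono_enorm fun t =>
          (enorm_sum_mul_translate_le K g t).trans_eq (enorm_eq_self _).symm
    _ = eLpNorm' (fun t => ∑' n, wienerLocalSup g n * H n t) 2 volume := by
        rw [eLpNorm_eq_eLpNorm' two_ne_zero ENNReal.ofNat_ne_top, ENNReal.toReal_ofNat]
    _ ≤ ∑' n, eLpNorm' (fun t => wienerLocalSup g n * H n t) 2 volume :=
        eLpNorm'_tsum_le (fun n => (hHmeas n).const_mul _) one_le_two
    _ = ∑' n, wienerLocalSup g n * eLpNorm' (H n) 2 volume := by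
        simp_rw [eLpNorm'_const_mul_ennreal (hHmeas _) _ two_pos]
    _ ≤ ∑' n, wienerLocalSup g n * ENNReal.ofReal √((1 + a⁻¹) * ∑ k ∈ K, B k) := by
        gcongr with n; exact hH n
    _ = wienerNorm g * ENNReal.ofReal √((1 + a⁻¹) * ∑ k ∈ K, B k) := by
        rw [ENNReal.tsum_mul_right, tsum_wienerLocalSup]

end ModulatedTranslates

/-- Walnut's estimate: for `g` with finite Wiener amalgam norm and any finitely supported
family of coefficients, `‖Σ c_{k,l} π_{(ak,al)} g‖_{L²} ≤ (1+a⁻¹) ‖g‖_W (Σ |c_{k,l}|²)^{1/2}`. -/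
theorem walnut_estimate (g : ℝ → ℂ) (hg : Measurable g) (hgW : wienerNorm g ≠ ⊤)
    (a : ℝ) (ha : 0 < a) (c : (ℤ × ℤ) →₀ ℂ) :
    MemLp (fun t => ∑ kl ∈ c.support, c kl * tfShift (a * kl.1) (a * kl.2) g t) 2
      (volume : Measure ℝ) ∧
    Real.sqrt (∫ t : ℝ, ‖∑ kl ∈ c.support, c kl * tfShift (a * kl.1) (a * kl.2) g t‖ ^ 2) ≤
      (1 + a⁻¹) * (wienerNorm g).toReal *
        Real.sqrt (∑ kl ∈ c.support, ‖c kl‖ ^ 2) := by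
  set K := c.support.image Prod.fst
  set L := c.support.image Prod.snd
  have hm : ∀ k, Continuous (trigPoly a L fun l => c (k, l)) := fun k => continuous_trigPoly L _
  have hnorm : √((1 + a⁻¹) * ∑ k ∈ K, (1 + a⁻¹) * ∑ l ∈ L, ‖c (k, l)‖ ^ 2)
      = (1 + a⁻¹) * √(∑ kl ∈ c.support, ‖c kl‖ ^ 2) := by
    rw [← Finset.mul_sum, ← c.sum_support_eq_sum_image_product (fun p => ‖c p‖ ^ 2)
      fun p hp => by simp [hp], ← mul_assoc, Real.sqrt_mul (by positivity),
      Real.sqrt_mul_self (by positivity)]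
  have hbound := eLpNorm_sum_mul_translate_le K ha g (fun k => (hm k).measurable)
    (fun k => by positivity) fun k _ x => lintegral_Ico_enorm_sq_trigPoly_le L _ ha x
  have hF : (fun t => ∑ kl ∈ c.support, c kl * tfShift (a * kl.1) (a * kl.2) g t)
      = fun t => ∑ k ∈ K, trigPoly a L (fun l => c (k, l)) t * g (t - a * k) :=
    funext (sum_tfShift_eq_sum_trigPoly_mul a g c)
  rw [hnorm, ← hF] at hbound
  refine (memLp_two_and_sqrt_integral_le ?_ (ENNReal.mul_ne_top hgW ENNReal.ofReal_ne_top)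
    hbound).imp_right fun h => h.trans_eq ?_
  · rw [hF]
    exact (Finset.measurable_fun_sum _ fun k _ => (hm k).measurable.mul
      (hg.comp (measurable_sub_const _))).aestronglyMeasurable
  · rw [ENNReal.toReal_mul, ENNReal.toReal_ofReal (by positivity)]
    ring
end

section
/- For every R > 0 and every z ∈ ℂ, the function ζ ↦ log|1 − z/ζ| is integrable over the disc {|ζ| < R} with respect to Lebesgue measure m on ℂ, and u_R(z) := ∫_{|ζ|<R} log|1 − z/ζ| dm(ζ) equals (π/2)|z|² when |z| ≤ R, and equals πR² log|z| − πR² log R + (π/2)R² when |z| > R. Moreover u_R(z) < (π/2)|z|² for all |z| > R. -/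
/-!
In polar coordinates the integral over the disc becomes `∫₀^R 2πr · A(r) dr`, where `A(r)` is the
average of `log|1 - z/ζ|` over the circle `|ζ| = r`. By Jensen's formula for `ζ ↦ ζ - z` this
average is `log⁺(|z|/r)`, so `u_R(z) = 2π ∫₀^R r log⁺(|z|/r) dr`, an elementary integral. The
final inequality is `log x < x - 1` at `x = |z|²/R²`.
-/

open MeasureTheory Complex

/-- The integrand `ζ ↦ log|1 - z/ζ| = log|ζ - z| - log|ζ|`. -/
noncomputable def logFactor (z ζ : ℂ) : ℝ :=
  Real.log (‖ζ - z‖) - Real.log (‖ζ‖)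

open Real Set Metric

section LogNorm

variable {E : Type*} [NormedAddCommGroup E] [NormedSpace ℝ E] [Nontrivial E]
  [FiniteDimensional ℝ E] [MeasurableSpace E] [BorelSpace E] (μ : Measure E)
  [μ.IsAddHaarMeasure]

theorem integrableOn_log_norm_ball (r : ℝ) :
    IntegrableOn (fun x : E ↦ Real.log ‖x‖) (ball 0 r) μ := by
  rw [integrableOn_fun_norm_addHaar μ (f := Real.log)]
  have hlog : IntervalIntegrable (fun y : ℝ ↦ y ^ (Module.finrank ℝ E - 1) * Real.log y)
      volume 0 r :=
    intervalIntegral.intervalIntegrable_log'.continuousOn_mul (continuous_pow _).continuousOn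
  simpa only [smul_eq_mul] using hlog.1.mono_set Ioo_subset_Ioc_self

theorem integrableOn_log_norm_sub_ball (z : E) (r : ℝ) :
    IntegrableOn (fun x : E ↦ Real.log ‖x - z‖) (ball 0 r) μ := by
  have h := ((measurePreserving_sub_right μ z).integrableOn_comp_preimage
    (MeasurableEquiv.subRight z).measurableEmbedding).2
    (integrableOn_log_norm_ball μ (r + ‖z‖))
  refine h.mono_set fun x hx ↦ ?_
  simp only [mem_preimage, mem_ball_zero_iff] at hx ⊢
  linarith [norm_sub_le x z]

end LogNorm

section PolarCoord

variable {E : Type*} [NormedAddCommGroup E] [NormedSpace ℝ E]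

theorem Complex.polarCoord_symm_eq_circleMap (p : ℝ × ℝ) :
    Complex.polarCoord.symm p = circleMap 0 p.1 p.2 := by
  rw [Complex.polarCoord_symm_apply, circleMap_zero, Complex.exp_mul_I]
  push_cast
  ring

theorem setIntegral_Ioo_neg_pi_pi_circleMap (f : ℂ → E) (c : ℂ) (r : ℝ) :
    ∫ θ in Ioo (-π) π, f (circleMap c r θ) = (2 * π) • circleAverage f c r := by
  have hper : Function.Periodic (fun θ ↦ f (circleMap c r θ)) (2 * π) :=
    fun θ ↦ by simp [periodic_circleMap c r θ]
  rw [circleAverage_def, smul_inv_smul₀ two_pi_pos.ne', ← integral_Ioc_eq_integral_Ioo,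
    ← intervalIntegral.integral_of_le (by linarith [pi_pos]),
    ← zero_add (2 * π), ← hper.intervalIntegral_add_eq (-π) 0]
  ring_nf

theorem Complex.integrableOn_comp_polarCoord_symm_iff (f : ℂ → E) :
    IntegrableOn (fun p : ℝ × ℝ ↦ p.1 • f (Complex.polarCoord.symm p)) polarCoord.target ↔
      Integrable f := by
  rw [← (volume_preserving_equiv_real_prod.symm).integrable_comp_emb
    measurableEquivRealProd.symm.measurableEmbedding, ← integrableOn_univ,
    ← integrableOn_congr_set_ae polarCoord_source_ae_eq_univ,
    ← polarCoord.symm_image_target_eq_source,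
    integrableOn_image_iff_integrableOn_abs_det_fderiv_smul volume
      polarCoord.open_target.measurableSet
      (fun p _ ↦ (hasFDerivAt_polarCoord_symm p).hasFDerivWithinAt) polarCoord.symm.injOn]
  refine integrableOn_congr_fun (fun p hp ↦ ?_) polarCoord.open_target.measurableSet
  rw [det_fderivPolarCoordSymm, abs_of_pos hp.1]
  rfl

theorem setIntegral_ball_eq_setIntegral_circleAverage {f : ℂ → E} {R : ℝ}
    (hf : IntegrableOn f (ball 0 R)) :
    ∫ ζ in ball 0 R, f ζ = ∫ r in Ioo 0 R, (2 * π * r) • circleAverage f 0 r := by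
  set g := (ball (0 : ℂ) R).indicator f
  have hg : IntegrableOn (fun p : ℝ × ℝ ↦ p.1 • g (Complex.polarCoord.symm p))
      (Ioi 0 ×ˢ Ioo (-π) π) :=
    (Complex.integrableOn_comp_polarCoord_symm_iff g).2
      ((integrable_indicator_iff measurableSet_ball).2 hf)
  have hinner : ∀ r ∈ Ioi (0 : ℝ), ∫ θ in Ioo (-π) π, r • g (Complex.polarCoord.symm (r, θ)) =
      (Ioo 0 R).indicator (fun r ↦ (2 * π * r) • circleAverage f 0 r) r := by
    intro r (hr : 0 < r)
    simp_rw [Complex.polarCoord_symm_eq_circleMap]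
    by_cases hrR : r < R
    · have hmem : ∀ θ, circleMap 0 r θ ∈ ball (0 : ℂ) R := fun θ ↦ by
        simpa [abs_of_pos hr] using hrR
      rw [indicator_of_mem (show r ∈ Ioo 0 R from ⟨hr, hrR⟩)]
      simp only [g, indicator_of_mem (hmem _), integral_smul, setIntegral_Ioo_neg_pi_pi_circleMap,
        smul_smul]
      ring_nf
    · have hmem : ∀ θ, circleMap 0 r θ ∉ ball (0 : ℂ) R := fun θ ↦ by
        simpa [abs_of_pos hr] using hrR
      simp [g, indicator_of_notMem (hmem _), hrR]
  calc ∫ ζ in ball 0 R, f ζ = ∫ p in polarCoord.target, p.1 • g (Complex.polarCoord.symm p) := by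
        rw [Complex.integral_comp_polarCoord_symm, integral_indicator measurableSet_ball]
    _ = ∫ r in Ioi 0, (Ioo 0 R).indicator (fun r ↦ (2 * π * r) • circleAverage f 0 r) r := by
        rw [polarCoord_target, Measure.volume_eq_prod, setIntegral_prod _ hg]
        exact setIntegral_congr_fun measurableSet_Ioi hinner
    _ = ∫ r in Ioo 0 R, (2 * π * r) • circleAverage f 0 r := by
        rw [setIntegral_indicator measurableSet_Ioo, Ioi_inter_Ioo, max_self]

end PolarCoord

theorem integral_id_mul_log {a : ℝ} (ha : 0 ≤ a) :
    ∫ r in 0..a, r * Real.log r = a ^ 2 / 2 * Real.log a - a ^ 2 / 4 := by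
  -- `r²/2 · log r - r²/4`, written so that continuity at `0` follows from that of `r * log r`
  set F : ℝ → ℝ := fun r ↦ r * (r * Real.log r) / 2 - r ^ 2 / 4
  have hF : ∀ r ∈ Ioo 0 a, HasDerivAt F (r * Real.log r) r := fun r hr ↦ by
    have hr0 : r ≠ 0 := hr.1.ne'
    have := ((hasDerivAt_id r).fun_mul ((hasDerivAt_id r).fun_mul
      (Real.hasDerivAt_log hr0))).div_const 2 |>.fun_sub ((hasDerivAt_pow 2 r).div_const 4)
    refine this.congr_deriv ?_
    simp only [id]
    field_simp
    ring
  have hFcont : ContinuousOn F (Icc 0 a) :=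
    ((continuous_id.mul continuous_mul_log).div_const 2 |>.sub
      ((continuous_pow 2).div_const 4)).continuousOn
  rw [intervalIntegral.integral_eq_sub_of_hasDeriv_right_of_le ha hFcont
    (fun r hr ↦ (hF r hr).hasDerivWithinAt) (continuous_mul_log.intervalIntegrable 0 a)]
  simp only [F]
  ring

theorem mul_posLog_inv_mul_of_le {r t : ℝ} (hr : 0 ≤ r) (hrt : r ≤ t) :
    r * log⁺ (r⁻¹ * t) = r * (Real.log t - Real.log r) := by
  rcases hr.eq_or_lt with rfl | hr
  · simp
  rw [posLog_eq_log, Real.log_mul (inv_ne_zero hr.ne') (hr.trans_le hrt).ne', Real.log_inv]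
  · ring
  · rw [abs_of_pos (mul_pos (inv_pos.2 hr) (hr.trans_le hrt))]
    exact (one_le_inv_mul₀ hr).2 hrt

theorem mul_posLog_inv_mul_of_ge {r t : ℝ} (ht : 0 ≤ t) (htr : t ≤ r) :
    r * log⁺ (r⁻¹ * t) = 0 := by
  rcases (ht.trans htr).eq_or_lt with rfl | hr
  · simp
  rw [(posLog_eq_zero_iff _).2, mul_zero]
  rw [abs_of_nonneg (by positivity)]
  exact (inv_mul_le_one₀ hr).2 htr

theorem integral_mul_posLog_inv_mul_of_le {a t : ℝ} (ha : 0 ≤ a) (hat : a ≤ t) :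
    ∫ r in 0..a, r * log⁺ (r⁻¹ * t) = a ^ 2 / 2 * (Real.log t - Real.log a) + a ^ 2 / 4 := by
  have heq : EqOn (fun r ↦ r * log⁺ (r⁻¹ * t)) (fun r ↦ r * Real.log t - r * Real.log r)
      (uIcc 0 a) := by
    intro r hr
    rw [uIcc_of_le ha] at hr
    simp only [mul_posLog_inv_mul_of_le hr.1 (hr.2.trans hat), mul_sub]
  rw [intervalIntegral.integral_congr heq, intervalIntegral.integral_sub
    ((continuous_mul_const (Real.log t)).intervalIntegrable 0 a)
    (continuous_mul_log.intervalIntegrable 0 a), intervalIntegral.integral_mul_const, integral_id,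
    integral_id_mul_log ha]
  ring

theorem setIntegral_Ioo_mul_posLog_of_le {R t : ℝ} (ht : 0 ≤ t) (htR : t ≤ R) :
    ∫ r in Ioo 0 R, r * log⁺ (r⁻¹ * t) = t ^ 2 / 4 := by
  have hzero : EqOn (fun r ↦ r * log⁺ (r⁻¹ * t)) 0 (uIcc t R) := by
    intro r hr
    rw [uIcc_of_le htR] at hr
    exact mul_posLog_inv_mul_of_ge ht hr.1
  have hint₁ : IntervalIntegrable (fun r ↦ r * log⁺ (r⁻¹ * t)) volume 0 t := by
    refine (intervalIntegrable_congr fun r hr ↦ ?_).2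
      (((continuous_mul_const (Real.log t)).sub continuous_mul_log).intervalIntegrable 0 t)
    rw [uIoc_of_le ht] at hr
    exact (mul_posLog_inv_mul_of_le hr.1.le hr.2).trans (mul_sub _ _ _)
  rw [← integral_Ioc_eq_integral_Ioo, ← intervalIntegral.integral_of_le (ht.trans htR),
    ← intervalIntegral.integral_add_adjacent_intervals hint₁
      ((intervalIntegrable_congr (hzero.mono Ioc_subset_Icc_self)).2 intervalIntegrable_const),
    intervalIntegral.integral_congr hzero, integral_mul_posLog_inv_mul_of_le ht le_rfl]
  simp

theorem setIntegral_Ioo_mul_posLog_of_lt {R t : ℝ} (hR : 0 < R) (hRt : R < t) :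
    ∫ r in Ioo 0 R, r * log⁺ (r⁻¹ * t) = R ^ 2 / 2 * (Real.log t - Real.log R) + R ^ 2 / 4 := by
  rw [← integral_Ioc_eq_integral_Ioo, ← intervalIntegral.integral_of_le hR.le,
    integral_mul_posLog_inv_mul_of_le hR.le hRt.le]

theorem sq_mul_log_sub_log_lt {R t : ℝ} (hR : 0 < R) (hRt : R < t) :
    R ^ 2 * (Real.log t - Real.log R) < (t ^ 2 - R ^ 2) / 2 := by
  have hlt := Real.log_lt_sub_one_of_pos (x := (t / R) ^ 2) (by positivity [hR.trans hRt])
    (one_lt_pow₀ ((one_lt_div hR).2 hRt) two_ne_zero).ne'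
  rw [Real.log_pow, Real.log_div (hR.trans hRt).ne' hR.ne', div_pow, lt_sub_iff_add_lt,
    lt_div_iff₀ (by positivity)] at hlt
  push_cast at hlt
  linarith

theorem circleAverage_logFactor (z : ℂ) {r : ℝ} (hr : r ≠ 0) :
    circleAverage (logFactor z) 0 r = log⁺ (r⁻¹ * ‖z‖) := by
  have hsub : logFactor z = (Real.log ‖· - z‖) - (Real.log ‖· - (0 : ℂ)‖) := by
    ext ζ; simp [logFactor]
  rw [hsub, circleAverage_sub (circleIntegrable_log_norm_sub_const r)
    (circleIntegrable_log_norm_sub_const r),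
    circleAverage_log_norm_sub_const_eq_log_radius_add_posLog hr,
    circleAverage_log_norm_sub_const_eq_log_radius_add_posLog hr]
  simp

theorem integrableOn_logFactor (z : ℂ) (R : ℝ) : IntegrableOn (logFactor z) (ball 0 R) :=
  (integrableOn_log_norm_sub_ball volume z R).sub (integrableOn_log_norm_ball volume R)

theorem setIntegral_ball_logFactor (z : ℂ) (R : ℝ) :
    ∫ ζ in ball 0 R, logFactor z ζ = 2 * π * ∫ r in Ioo 0 R, r * log⁺ (r⁻¹ * ‖z‖) := by
  rw [setIntegral_ball_eq_setIntegral_circleAverage (integrableOn_logFactor z R),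
    ← integral_const_mul]
  refine setIntegral_congr_fun measurableSet_Ioo fun r hr ↦ ?_
  rw [circleAverage_logFactor z hr.1.ne', smul_eq_mul]
  ring

/-- `u_R(z) = ∫_{|ζ|<R} log|1 - z/ζ| dm(ζ)` equals `(π/2)|z|²` for `|z| ≤ R` and
`πR² log|z| - πR² log R + (π/2)R²` for `|z| > R`; moreover `u_R(z) < (π/2)|z|²` for
`|z| > R`. -/
theorem uR_integral (R : ℝ) (hR : 0 < R) (z : ℂ) :
    IntegrableOn (fun ζ : ℂ => logFactor z ζ) (Metric.ball (0 : ℂ) R) volume ∧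
    (‖z‖ ≤ R →
      (∫ ζ in Metric.ball (0 : ℂ) R, logFactor z ζ) =
        Real.pi / 2 * ‖z‖ ^ 2) ∧
    (R < ‖z‖ →
      (∫ ζ in Metric.ball (0 : ℂ) R, logFactor z ζ) =
        Real.pi * R ^ 2 * Real.log (‖z‖) - Real.pi * R ^ 2 * Real.log R +
          Real.pi / 2 * R ^ 2) ∧
    (R < ‖z‖ →
      (∫ ζ in Metric.ball (0 : ℂ) R, logFactor z ζ) <
        Real.pi / 2 * ‖z‖ ^ 2) := by
  refine ⟨integrableOn_logFactor z R, fun hzR ↦ ?_, fun hRz ↦ ?_, fun hRz ↦ ?_⟩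
  · rw [setIntegral_ball_logFactor, setIntegral_Ioo_mul_posLog_of_le (norm_nonneg z) hzR]
    ring
  · rw [setIntegral_ball_logFactor, setIntegral_Ioo_mul_posLog_of_lt hR hRz]
    ring
  · rw [setIntegral_ball_logFactor, setIntegral_Ioo_mul_posLog_of_lt hR hRz]
    linarith [mul_lt_mul_of_pos_left (sq_mul_log_sub_log_lt hR hRz) pi_pos]
end
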